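/- arXiv:2310.12312 — 2 statements merged into one kernel-verified Lean document; each statement's English description precedes it below -/
import Mathlib

section
/- Let α > −1 be a real number, n ∈ ℕ, and j ∈ ℕ. For all x, y ∈ ℝ with x ≠ y, the j-th partial derivative of the Laguerre kernel with respect to its second variable satisfies (∂^j/∂y^j) K_n^α(x,y) = ((n+1)!·j!/Γ(α+n+1)) · (L_n^α(x)·T_j[L_{n+1}^α; y](x) − L_{n+1}^α(x)·T_j[L_n^α; y](x)) / (x − y)^{j+1}, where T_j[f; y](x) = Σ_{k=0}^j (f^{(k)}(y)/k!)(x − y)^k is the Taylor polynomial of f of degree j centered at y. -/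
/-!
By the three-term recurrence of the Laguerre polynomials, the kernel satisfies the
Christoffel–Darboux formula `(x - t) K_n^α(x, t) = c f(t)` with `c = (n+1)!/Γ(α+n+1)` and
`f = L_n^α(x) L_{n+1}^α - L_{n+1}^α(x) L_n^α`. For every polynomial `f`, the `j`-th
derivative of `t ↦ f(t)/(x - t)` is `j! T_j[f; t](x)/(x - t)^(j+1)`: induct on `j`, using that
the derivative of `T_j[f; t](x)` in its centre `t` telescopes to `f^(j+1)(t) (x - t)^j / j!`.
-/

open Polynomial Finset MeasureTheory Real

/-- The generalized Laguerre polynomial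
`L_n^α(x) = Σ_{k=0}^n (−1)^k ((α+k+1)_{n−k} / ((n−k)!·k!)) x^k`. -/
noncomputable def laguerre (α : ℝ) (n : ℕ) : Polynomial ℝ :=
  ∑ k ∈ Finset.range (n + 1),
    Polynomial.C ((-1 : ℝ) ^ k * (ascPochhammer ℝ (n - k)).eval (α + k + 1) /
      ((n - k).factorial * k.factorial)) * Polynomial.X ^ k


/-- The `n`-th Laguerre reproducing kernel
`K_n^α(x,y) = Σ_{k=0}^n (k!/Γ(α+k+1)) L_k^α(x) L_k^α(y)`. -/
noncomputable def laguerreKernel (α : ℝ) (n : ℕ) (x y : ℝ) : ℝ :=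
  ∑ k ∈ Finset.range (n + 1),
    (k.factorial : ℝ) / Real.Gamma (α + k + 1) * (laguerre α k).eval x * (laguerre α k).eval y

/-- `T_j[f; y](x) = Σ_{k=0}^j (f^{(k)}(y)/k!)(x − y)^k`, the degree-`j` Taylor polynomial of
the polynomial `f` centered at `y`, evaluated at `x`. -/
noncomputable def taylorEval (f : Polynomial ℝ) (j : ℕ) (y x : ℝ) : ℝ :=
  ∑ k ∈ Finset.range (j + 1),
    (Polynomial.derivative^[k] f).eval y / k.factorial * (x - y) ^ k

theorem coeff_laguerre (α : ℝ) (n m : ℕ) :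
    (laguerre α n).coeff m = if m ≤ n then
      (-1 : ℝ) ^ m * (ascPochhammer ℝ (n - m)).eval (α + m + 1) /
        ((n - m).factorial * m.factorial) else 0 := by
  simp [laguerre, finsetSum_coeff]

theorem coeff_laguerre_of_add_eq (α : ℝ) {m l n : ℕ} (h : m + l = n) :
    (laguerre α n).coeff m =
      (-1 : ℝ) ^ m * (ascPochhammer ℝ l).eval (α + m + 1) / (l.factorial * m.factorial) := by
  subst h
  simp [coeff_laguerre]

theorem coeff_laguerre_of_lt (α : ℝ) {n m : ℕ} (h : n < m) : (laguerre α n).coeff m = 0 := by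
  simp [coeff_laguerre, h.not_ge]

@[simp]
theorem laguerre_zero (α : ℝ) : laguerre α 0 = 1 := by
  simp [laguerre]

@[simp]
theorem laguerre_one (α : ℝ) : laguerre α 1 = C (α + 1) - X := by
  simp [laguerre, Finset.sum_range_succ, C_add, sub_eq_add_neg]

theorem laguerre_add_two (α : ℝ) (n : ℕ) :
    C ((n : ℝ) + 2) * laguerre α (n + 2)
      = (C (2 * n + 3 + α) - X) * laguerre α (n + 1) - C (n + 1 + α) * laguerre α n := by
  have fact_succ (k : ℕ) : ((k + 1).factorial : ℝ) = (k + 1) * k.factorial := by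
    push_cast [Nat.factorial_succ]; ring
  have fact_ne (k : ℕ) : (k.factorial : ℝ) ≠ 0 := by positivity
  ext m
  simp only [sub_mul, coeff_sub, coeff_C_mul]
  rcases m with _ | k
  · simp only [coeff_X_mul_zero, coeff_laguerre_of_add_eq α (zero_add _)]
    simp only [ascPochhammer_succ_eval, fact_succ]
    field_simp
    push_cast
    ring
  rw [coeff_X_mul]
  obtain ⟨l, rfl⟩ | rfl | rfl | hlt :
      (∃ l, n = k + 1 + l) ∨ k = n ∨ k = n + 1 ∨ n + 2 < k + 1 := by
    rcases le_or_gt (k + 1) n with h | h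
    · exact Or.inl ⟨n - (k + 1), by omega⟩
    · omega
  · rw [coeff_laguerre_of_add_eq α (l := l + 2) (by omega),
      coeff_laguerre_of_add_eq α (l := l + 1) (by omega),
      coeff_laguerre_of_add_eq α (l := l) rfl,
      coeff_laguerre_of_add_eq α (m := k) (l := l + 2) (by omega)]
    have shift : (ascPochhammer ℝ (l + 2)).eval (α + k + 1)
        = (α + k + 1) * (ascPochhammer ℝ (l + 1)).eval (α + (k + 1 : ℕ) + 1) := by
      rw [ascPochhammer_succ_left, eval_mul, eval_X, eval_comp, eval_add, eval_X, eval_one]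
      push_cast; ring_nf
    rw [shift]
    simp only [ascPochhammer_succ_eval, fact_succ, pow_succ]
    field_simp
    push_cast
    ring
  · rw [coeff_laguerre_of_add_eq α (l := 1) rfl, coeff_laguerre_of_add_eq α (l := 0) rfl,
      coeff_laguerre_of_lt α (Nat.lt_succ_self k), coeff_laguerre_of_add_eq α (l := 1) rfl]
    simp only [ascPochhammer_one, ascPochhammer_zero, eval_X, eval_one, fact_succ, pow_succ,
      Nat.factorial_zero, Nat.factorial_one]
    field_simp
    push_cast
    ring
  · rw [coeff_laguerre_of_add_eq α (l := 0) rfl, coeff_laguerre_of_add_eq α (l := 0) rfl,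
      coeff_laguerre_of_lt α (show n + 1 < n + 1 + 1 by omega),
      coeff_laguerre_of_lt α (show n < n + 1 + 1 by omega)]
    simp only [ascPochhammer_zero, eval_one, fact_succ, pow_succ, Nat.factorial_zero]
    field_simp
    push_cast
    ring
  · simp [coeff_laguerre_of_lt α hlt, coeff_laguerre_of_lt α (show n + 1 < k + 1 by omega),
      coeff_laguerre_of_lt α (show n < k + 1 by omega),
      coeff_laguerre_of_lt α (show n + 1 < k by omega)]

theorem laguerre_add_two_eval (α : ℝ) (n : ℕ) (t : ℝ) :
    ((n : ℝ) + 2) * (laguerre α (n + 2)).eval t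
      = (2 * n + 3 + α - t) * (laguerre α (n + 1)).eval t
        - (n + 1 + α) * (laguerre α n).eval t := by
  simpa using congrArg (eval t) (laguerre_add_two α n)

theorem laguerreKernel_succ (α : ℝ) (n : ℕ) (x y : ℝ) :
    laguerreKernel α (n + 1) x y = laguerreKernel α n x y
      + ((n + 1).factorial : ℝ) / Gamma (α + (n + 1 : ℕ) + 1)
        * (laguerre α (n + 1)).eval x * (laguerre α (n + 1)).eval y :=
  Finset.sum_range_succ _ _

theorem sub_mul_laguerreKernel {α : ℝ} (hα : -1 < α) (n : ℕ) (x y : ℝ) :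
    (x - y) * laguerreKernel α n x y
      = ((n + 1).factorial : ℝ) / Gamma (α + n + 1) *
        ((laguerre α n).eval x * (laguerre α (n + 1)).eval y
          - (laguerre α (n + 1)).eval x * (laguerre α n).eval y) := by
  induction n with
  | zero =>
    simp only [laguerreKernel, zero_add, range_one, sum_singleton, Nat.factorial_zero,
      Nat.cast_one, CharP.cast_eq_zero, add_zero, one_div, laguerre_zero, eval_one, mul_one,
      Nat.factorial_one, laguerre_one, map_add, map_one, eval_sub, eval_add, eval_C, eval_X,
      one_mul, sub_sub_sub_cancel_left]
    ring
  | succ n ih =>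
    have hpos : 0 < α + n + 1 := by linarith [(n.cast_nonneg : (0 : ℝ) ≤ n)]
    have hΓ : Gamma (α + (n + 1 : ℕ) + 1) = (α + n + 1) * Gamma (α + n + 1) := by
      rw [← Gamma_add_one hpos.ne']; push_cast; ring_nf
    have hrec_x := laguerre_add_two_eval α n x
    have hrec_y := laguerre_add_two_eval α n y
    have hfact : (((n + 1) + 1).factorial : ℝ) = (n + 2) * (n + 1).factorial := by
      push_cast [Nat.factorial_succ]; ring
    have hΓ_ne := (Gamma_pos_of_pos hpos).ne'
    rw [laguerreKernel_succ, mul_add, ih, hΓ, hfact, show n + 1 + 1 = n + 2 from rfl]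
    field_simp
    linear_combination (laguerre α (n + 1)).eval y * hrec_x - (laguerre α (n + 1)).eval x * hrec_y

theorem taylorEval_succ (f : ℝ[X]) (j : ℕ) (y x : ℝ) :
    taylorEval f (j + 1) y x = taylorEval f j y x
      + (derivative^[j + 1] f).eval y / (j + 1).factorial * (x - y) ^ (j + 1) :=
  Finset.sum_range_succ _ _

theorem taylorEval_sub (f g : ℝ[X]) (j : ℕ) (y x : ℝ) :
    taylorEval (f - g) j y x = taylorEval f j y x - taylorEval g j y x := by
  simp only [taylorEval, iterate_derivative_sub, eval_sub, sub_div, sub_mul, sum_sub_distrib]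

theorem taylorEval_C_mul (a : ℝ) (f : ℝ[X]) (j : ℕ) (y x : ℝ) :
    taylorEval (C a * f) j y x = a * taylorEval f j y x := by
  simp only [taylorEval, iterate_derivative_C_mul, eval_mul, eval_C, mul_div_assoc, mul_assoc,
    mul_sum]

theorem hasDerivAt_sub_pow_succ (x y : ℝ) (m : ℕ) :
    HasDerivAt (fun t => (x - t) ^ (m + 1)) (-((m + 1 : ℕ) * (x - y) ^ m)) y := by
  simpa using ((hasDerivAt_id y).const_sub x).fun_pow (m + 1)

theorem hasDerivAt_taylorEval_center (f : ℝ[X]) (j : ℕ) (x y : ℝ) :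
    HasDerivAt (fun t => taylorEval f j t x)
      ((derivative^[j + 1] f).eval y / j.factorial * (x - y) ^ j) y := by
  induction j with
  | zero => simpa [taylorEval] using f.hasDerivAt y
  | succ j ih =>
    have hder : HasDerivAt (fun t => (derivative^[j + 1] f).eval t)
        ((derivative^[j + 1 + 1] f).eval y) y := by
      simpa only [← Function.iterate_succ_apply' derivative] using
        (derivative^[j + 1] f).hasDerivAt y
    have hfact_ne : (j.factorial : ℝ) ≠ 0 := by positivity
    rw [show (fun t => taylorEval f (j + 1) t x) = _ from funext fun t => taylorEval_succ f j t x]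
    have hterm := (hder.div_const ((j + 1).factorial : ℝ)).fun_mul (hasDerivAt_sub_pow_succ x y j)
    refine (ih.fun_add hterm).congr_deriv ?_
    push_cast [Nat.factorial_succ]
    field_simp
    ring

theorem iteratedDeriv_eval_div_sub (f : ℝ[X]) {x y : ℝ} (hy : y ≠ x) (j : ℕ) :
    iteratedDeriv j (fun t => f.eval t / (x - t)) y
      = j.factorial * taylorEval f j y x / (x - y) ^ (j + 1) := by
  induction j generalizing y with
  | zero => simp [taylorEval]
  | succ j ih =>
    have hxy : x - y ≠ 0 := sub_ne_zero.mpr hy.symm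
    have hnear : iteratedDeriv j (fun t => f.eval t / (x - t))
        =ᶠ[nhds y] fun t => j.factorial * taylorEval f j t x / (x - t) ^ (j + 1) := by
      filter_upwards [isOpen_ne.mem_nhds hy] with t ht using ih ht
    have hquot := ((hasDerivAt_taylorEval_center f j x y).const_mul (j.factorial : ℝ)).fun_div
      (hasDerivAt_sub_pow_succ x y j) (pow_ne_zero _ hxy)
    rw [iteratedDeriv_succ, hnear.deriv_eq, hquot.deriv, taylorEval_succ]
    push_cast [Nat.factorial_succ]
    field_simp
    ring

/-- Formula for the `j`-th partial derivative (in the second variable) of the Laguerre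
kernel in terms of Taylor polynomials of the Laguerre polynomials. -/
theorem laguerre_kernel_partial_derivative (α : ℝ) (hα : -1 < α) (n j : ℕ)
    (x y : ℝ) (hxy : x ≠ y) :
    iteratedDeriv j (fun t => laguerreKernel α n x t) y
      = ((n + 1).factorial : ℝ) * j.factorial / Real.Gamma (α + n + 1) *
          ((laguerre α n).eval x * taylorEval (laguerre α (n + 1)) j y x
            - (laguerre α (n + 1)).eval x * taylorEval (laguerre α n) j y x)
          / (x - y) ^ (j + 1) := by
  set f := C ((laguerre α n).eval x) * laguerre α (n + 1)
    - C ((laguerre α (n + 1)).eval x) * laguerre α n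
  have hkernel : (fun t => laguerreKernel α n x t)
      =ᶠ[nhds y] fun t => (n + 1).factorial / Gamma (α + n + 1) * (f.eval t / (x - t)) := by
    filter_upwards [isOpen_ne.mem_nhds hxy.symm] with t ht
    have hxt : x - t ≠ 0 := sub_ne_zero.mpr (Ne.symm ht)
    rw [← mul_div_assoc, eq_div_iff hxt, mul_comm, sub_mul_laguerreKernel hα]
    simp [f]
  rw [hkernel.iteratedDeriv_eq, iteratedDeriv_const_mul_field,
    iteratedDeriv_eval_div_sub f hxy.symm, taylorEval_sub, taylorEval_C_mul, taylorEval_C_mul]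
  ring
end

section
/- Let α > −1, M ≥ 1, c_1, ..., c_M ∈ ℝ, μ_1, ..., μ_M ∈ ℝ, ν_1, ..., ν_M ∈ ℕ, and n ≥ 1. Suppose S_n is a real polynomial of degree n with leading coefficient (−1)^n/n! satisfying ⟨S_n, p⟩_S = 0 for every real polynomial p with deg p < n. Then for all x ∈ ℝ, S_n(x) = L_n^α(x) − Σ_{j=1}^M μ_j · S_n^{(ν_j)}(c_j) · (∂^{ν_j}/∂y^{ν_j}) K_{n−1}^α(x, y)|_{y=c_j}. -/
open Polynomial Finset MeasureTheory Real

/-- The discrete Sobolev inner product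
`⟨f, g⟩_S = ∫_0^∞ f(x) g(x) x^α e^{−x} dx + Σ_{j=1}^M μ_j f^{(ν_j)}(c_j) g^{(ν_j)}(c_j)`. -/
noncomputable def sobolevInner (α : ℝ) {M : ℕ} (c μ : Fin M → ℝ) (ν : Fin M → ℕ)
    (f g : Polynomial ℝ) : ℝ :=
  (∫ x in Set.Ioi (0 : ℝ), f.eval x * g.eval x * x ^ α * Real.exp (-x)) +
  ∑ j, μ j * (Polynomial.derivative^[ν j] f).eval (c j) *
    (Polynomial.derivative^[ν j] g).eval (c j)


/-!
The Laguerre polynomials are orthogonal for the moment functional `I p = ∫₀^∞ p(x) x^α e^{-x} dx`,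
with `I(L_k²) = Γ(α+k+1)/k!`: pairing `L_k` with `x^j` gives, up to a factor, the `k`-th forward
difference at `0` of the degree-`j` polynomial `t ↦ (α+t+1)_j`, which vanishes for `j < k`.
Consequently every linear functional `D` is reproduced on polynomials of degree `< n` by
`x ↦ D_y K_{n-1}(x, y)`. With `D_j p = p^{(ν_j)}(c_j)`, the polynomial
`T = L_n - S - Σ_j μ_j S^{(ν_j)}(c_j) D_j K_{n-1}(·, y)` has degree `< n`, since `S` and `L_n` share
their leading term, and `I(T p) = -⟨S, p⟩_S = 0` for `deg p < n`; expanding `T` in the orthogonal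
basis `L_0, …, L_{n-1}` gives `T = 0`.
-/

open fwdDiff

namespace Polynomial.Sequence

variable {K : Type*} [Field K]

structure IsOrthogonal (I : K[X] →ₗ[K] K) (P : Sequence K) : Prop where
  apply_mul_of_degree_lt : ∀ (k : ℕ) (p : K[X]), p.degree < k → I (P k * p) = 0
  apply_mul_self_ne_zero : ∀ k, I (P k * P k) ≠ 0

noncomputable def reproducingKernel (I : K[X] →ₗ[K] K) (P : Sequence K) (n : ℕ)
    (D : K[X] →ₗ[K] K) : K[X] :=
  ∑ k ∈ range n, (D (P k) / I (P k * P k)) • P k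

variable {I : K[X] →ₗ[K] K} {P : Sequence K}

theorem reproducingKernel_mem_degreeLT (n : ℕ) (D : K[X] →ₗ[K] K) :
    P.reproducingKernel I n D ∈ degreeLT K n :=
  Submodule.sum_mem _ fun k hk => Submodule.smul_mem _ _ <| by
    rw [mem_degreeLT, P.degree_eq, Nat.cast_lt]
    exact mem_range.mp hk

theorem exists_eq_sum_smul_of_degree_lt {n : ℕ} {p : K[X]} (hp : p.degree < n) :
    ∃ b : ℕ → K, ∑ k ∈ range n, b k • P k = p := by
  have hmem : p ∈ degreeLT K n := mem_degreeLT.mpr hp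
  rwa [← P.span_degreeLT fun i _ => (leadingCoeff_ne_zero.mpr (P.ne_zero i)).isUnit,
    show Set.Iio n = (range n : Set ℕ) by simp,
    Submodule.mem_span_image_finset_iff_exists_fun'] at hmem

namespace IsOrthogonal

variable (hP : P.IsOrthogonal I)
include hP

theorem apply_mul_eq_zero_of_ne {k l : ℕ} (hkl : k ≠ l) : I (P k * P l) = 0 := by
  rcases hkl.lt_or_gt with h | h
  · rw [mul_comm]
    exact hP.apply_mul_of_degree_lt l (P k) (by simpa using h)
  · exact hP.apply_mul_of_degree_lt k (P l) (by simpa using h)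

theorem apply_mul_sum_smul {n k : ℕ} (hk : k < n) (b : ℕ → K) :
    I (P k * ∑ l ∈ range n, b l • P l) = b k * I (P k * P k) := by
  simp only [mul_sum, mul_smul_comm, map_sum, map_smul, smul_eq_mul]
  exact sum_eq_single_of_mem k (mem_range.mpr hk)
    fun l _ hlk => by rw [hP.apply_mul_eq_zero_of_ne hlk.symm, mul_zero]

theorem eq_sum_smul_of_degree_lt {n : ℕ} {p : K[X]} (hp : p.degree < n) :
    p = ∑ k ∈ range n, (I (P k * p) / I (P k * P k)) • P k := by
  obtain ⟨b, rfl⟩ := P.exists_eq_sum_smul_of_degree_lt hp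
  refine sum_congr rfl fun k hk => ?_
  rw [hP.apply_mul_sum_smul (mem_range.mp hk),
    mul_div_cancel_right₀ _ (hP.apply_mul_self_ne_zero k)]

theorem eq_zero_of_apply_mul_eq_zero {n : ℕ} {p : K[X]} (hp : p.degree < n)
    (h : ∀ q : K[X], q.degree < n → I (p * q) = 0) : p = 0 := by
  rw [hP.eq_sum_smul_of_degree_lt hp]
  refine sum_eq_zero fun k hk => ?_
  rw [mul_comm, h _ (by simpa using mem_range.mp hk), zero_div, zero_smul]

theorem apply_eq_reproducingKernel_mul (D : K[X] →ₗ[K] K) {n : ℕ} {p : K[X]}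
    (hp : p.degree < n) : D p = I (P.reproducingKernel I n D * p) := by
  conv_lhs => rw [hP.eq_sum_smul_of_degree_lt hp]
  simp only [reproducingKernel, sum_mul, smul_mul_assoc, map_sum, map_smul, smul_eq_mul]
  exact sum_congr rfl fun k _ => by ring

end IsOrthogonal

end Polynomial.Sequence

theorem sum_range_neg_one_pow_mul_choose_mul_eval {R : Type*} [CommRing R] (Q : R[X]) (k : ℕ) :
    ∑ i ∈ range (k + 1), (-1) ^ i * (k.choose i : R) * Q.eval (i : R) =
      (-1) ^ k * (Δ_[1])^[k] Q.eval 0 := by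
  rw [fwdDiff_iter_eq_sum_shift, mul_sum]
  refine sum_congr rfl fun i hi => ?_
  obtain ⟨d, rfl⟩ := Nat.exists_eq_add_of_le (Nat.lt_succ_iff.mp (mem_range.mp hi))
  simp only [Nat.add_sub_cancel_left, zero_add, nsmul_eq_mul, mul_one, zsmul_eq_mul]
  push_cast
  have hsq : ((-1 : R) ^ d) * (-1) ^ d = 1 := by rw [← mul_pow]; simp
  linear_combination (-1 : R) ^ i * ((i + d).choose i : R) * Q.eval (i : R) * hsq.symm

theorem Real.Gamma_add_nat {s : ℝ} (hs : 0 < s) (j : ℕ) :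
    Gamma (s + j) = Gamma s * (ascPochhammer ℝ j).eval s := by
  induction j with
  | zero => simp
  | succ j ih =>
    rw [Nat.cast_succ, ← add_assoc, Gamma_add_one (by positivity), ih, ascPochhammer_succ_right]
    simp only [eval_mul, eval_add, eval_X, eval_natCast]
    ring

theorem natDegree_ascPochhammer_comp_X_add_C {R : Type*} [CommRing R] [IsDomain R] (j : ℕ)
    (a : R) : ((ascPochhammer R j).comp (X + C a)).natDegree = j := by
  rw [natDegree_comp, ascPochhammer_natDegree, natDegree_X_add_C, mul_one]

noncomputable def Polynomial.evalIterateDerivative {R : Type*} [CommSemiring R] (r : R) (m : ℕ) :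
    R[X] →ₗ[R] R :=
  leval r ∘ₗ derivative ^ m

theorem Polynomial.evalIterateDerivative_apply {R : Type*} [CommSemiring R] (r : R) (m : ℕ)
    (p : R[X]) : evalIterateDerivative r m p = (derivative^[m] p).eval r := by
  simp [evalIterateDerivative, Module.End.pow_apply]

theorem Polynomial.iteratedDeriv_eval {𝕜 : Type*} [NontriviallyNormedField 𝕜] (p : 𝕜[X])
    (m : ℕ) : iteratedDeriv m (fun x => p.eval x) = fun x => (derivative^[m] p).eval x := by
  induction m generalizing p with
  | zero => simp
  | succ m ih =>
    have hderiv : deriv (fun x => p.eval x) = fun x => (derivative p).eval x := by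
      funext x
      exact p.deriv
    rw [iteratedDeriv_succ', hderiv, ih, ← Function.iterate_succ_apply]

theorem laguerre_coeff (α : ℝ) (n k : ℕ) :
    (laguerre α n).coeff k = if k ≤ n then
      (-1 : ℝ) ^ k * (ascPochhammer ℝ (n - k)).eval (α + k + 1) /
        ((n - k).factorial * k.factorial) else 0 := by
  simp only [laguerre, finsetSum_coeff, coeff_C_mul, coeff_X_pow, mul_ite, mul_one, mul_zero,
    sum_ite_eq, mem_range, Nat.lt_succ_iff]

theorem laguerre_degree (α : ℝ) (n : ℕ) : (laguerre α n).degree = n := by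
  refine degree_eq_of_le_of_coeff_ne_zero ?_ (by simp [laguerre_coeff, Nat.factorial_ne_zero])
  refine (degree_sum_le _ _).trans (Finset.sup_le fun k hk => ?_)
  exact (degree_C_mul_X_pow_le _ _).trans (by exact_mod_cast Nat.lt_succ_iff.mp (mem_range.mp hk))

theorem laguerre_leadingCoeff (α : ℝ) (n : ℕ) :
    (laguerre α n).leadingCoeff = (-1) ^ n / n.factorial := by
  simp [leadingCoeff, natDegree_eq_of_degree_eq_some (laguerre_degree α n), laguerre_coeff]

noncomputable def laguerreSequence (α : ℝ) : Sequence ℝ := ⟨laguerre α, laguerre_degree α⟩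

/-- The moment functional `p ↦ ∫₀^∞ p(x) x^α e^{-x} dx`, defined through its moments
`Γ(α + m + 1)` so that it is linear for every `α`. -/
noncomputable def laguerreFunctional (α : ℝ) : ℝ[X] →ₗ[ℝ] ℝ :=
  lsum fun m => Gamma (α + m + 1) • LinearMap.id

theorem laguerreFunctional_C_mul_X_pow (α a : ℝ) (m : ℕ) :
    laguerreFunctional α (C a * X ^ m) = a * Gamma (α + m + 1) := by
  rw [C_mul_X_pow_eq_monomial, laguerreFunctional, lsum_apply, sum_monomial_index]
  · simp [mul_comm]
  · simp

section Orthogonality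

variable {α : ℝ}

theorem add_natCast_add_one_pos (hα : -1 < α) (m : ℕ) : 0 < α + m + 1 := by
  have : (0 : ℝ) ≤ m := m.cast_nonneg
  linarith

theorem laguerre_coeff_mul_Gamma (hα : -1 < α) {i k : ℕ} (hik : i ≤ k) (j : ℕ) :
    (-1 : ℝ) ^ i * (ascPochhammer ℝ (k - i)).eval (α + i + 1) /
        ((k - i).factorial * i.factorial) * Gamma (α + ↑(i + j) + 1) =
      Gamma (α + k + 1) / k.factorial *
        ((-1) ^ i * k.choose i * ((ascPochhammer ℝ j).comp (X + C (α + 1))).eval (i : ℝ)) := by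
  have hs := add_natCast_add_one_pos hα i
  have hj : Gamma (α + ↑(i + j) + 1) =
      Gamma (α + i + 1) * (ascPochhammer ℝ j).eval (α + i + 1) := by
    rw [← Real.Gamma_add_nat hs]; push_cast; ring_nf
  have hk : Gamma (α + k + 1) =
      Gamma (α + i + 1) * (ascPochhammer ℝ (k - i)).eval (α + i + 1) := by
    rw [← Real.Gamma_add_nat hs, Nat.cast_sub hik]; ring_nf
  have hQ : ((ascPochhammer ℝ j).comp (X + C (α + 1))).eval (i : ℝ) =
      (ascPochhammer ℝ j).eval (α + i + 1) := by
    simp only [eval_comp, eval_add, eval_X, eval_C]; ring_nf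
  rw [hj, hk, hQ, Nat.cast_choose ℝ hik]
  field_simp

theorem laguerreFunctional_laguerre_mul_X_pow (hα : -1 < α) (k j : ℕ) :
    laguerreFunctional α (laguerre α k * X ^ j) =
      (-1) ^ k * Gamma (α + k + 1) / k.factorial *
        (Δ_[1])^[k] ((ascPochhammer ℝ j).comp (X + C (α + 1))).eval 0 := by
  have hterm : ∀ i ∈ range (k + 1), laguerreFunctional α
      (C ((-1 : ℝ) ^ i * (ascPochhammer ℝ (k - i)).eval (α + i + 1) /
        ((k - i).factorial * i.factorial)) * X ^ i * X ^ j) =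
      Gamma (α + k + 1) / k.factorial *
        ((-1) ^ i * k.choose i * ((ascPochhammer ℝ j).comp (X + C (α + 1))).eval (i : ℝ)) := by
    intro i hi
    rw [mul_assoc, ← pow_add, laguerreFunctional_C_mul_X_pow,
      laguerre_coeff_mul_Gamma hα (Nat.lt_succ_iff.mp (mem_range.mp hi))]
  rw [laguerre, sum_mul, map_sum, sum_congr rfl hterm, ← mul_sum,
    sum_range_neg_one_pow_mul_choose_mul_eval]
  ring

theorem laguerreFunctional_laguerre_mul_of_degree_lt (hα : -1 < α) {k : ℕ} {p : ℝ[X]}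
    (hp : p.degree < k) : laguerreFunctional α (laguerre α k * p) = 0 := by
  rcases eq_or_ne p 0 with rfl | hp0
  · simp
  rw [as_sum_range_C_mul_X_pow p, mul_sum, map_sum]
  refine sum_eq_zero fun j hj => ?_
  have hjk : j < k :=
    ((natDegree_lt_iff_degree_lt hp0).mpr hp).trans_le' (Nat.lt_succ_iff.mp (mem_range.mp hj))
  rw [mul_left_comm, ← smul_eq_C_mul, map_smul, laguerreFunctional_laguerre_mul_X_pow hα,
    fwdDiff_iter_eq_zero_of_degree_lt]
  · simp
  · rwa [natDegree_ascPochhammer_comp_X_add_C]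

theorem laguerreFunctional_laguerre_mul_X_pow_self (hα : -1 < α) (k : ℕ) :
    laguerreFunctional α (laguerre α k * X ^ k) = (-1) ^ k * Gamma (α + k + 1) := by
  have hmonic : ((ascPochhammer ℝ k).comp (X + C (α + 1))).Monic :=
    (monic_ascPochhammer ℝ k).comp_X_add_C _
  have := fwdDiff_iter_degree_eq_factorial ((ascPochhammer ℝ k).comp (X + C (α + 1)))
  rw [natDegree_ascPochhammer_comp_X_add_C, hmonic.leadingCoeff, one_smul] at this
  rw [laguerreFunctional_laguerre_mul_X_pow hα, this]
  simp [Nat.factorial_ne_zero]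

theorem degree_laguerre_sub_lt {n : ℕ} {p : ℝ[X]} (hdeg : p.natDegree = n)
    (hlead : p.leadingCoeff = (-1) ^ n / n.factorial) : (laguerre α n - p).degree < n := by
  have hp0 : p ≠ 0 := leadingCoeff_ne_zero.mp (by simp [hlead, Nat.factorial_ne_zero])
  have h := degree_sub_lt_left (p := laguerre α n) (q := p)
    (by rw [laguerre_degree, degree_eq_natDegree hp0, hdeg])
    (by simp [← degree_eq_bot, laguerre_degree]) (by rw [laguerre_leadingCoeff, hlead])
  rwa [laguerre_degree] at h

theorem laguerreFunctional_laguerre_mul_self (hα : -1 < α) (k : ℕ) :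
    laguerreFunctional α (laguerre α k * laguerre α k) = Gamma (α + k + 1) / k.factorial := by
  set a : ℝ := (-1) ^ k / k.factorial
  have ha : a ≠ 0 := by simp [a, Nat.factorial_ne_zero]
  have hlow := degree_laguerre_sub_lt (α := α) (p := C a * X ^ k)
    (natDegree_C_mul_X_pow k a ha) (leadingCoeff_C_mul_X_pow a k)
  have hsplit : laguerre α k * laguerre α k =
      a • (laguerre α k * X ^ k) + laguerre α k * (laguerre α k - C a * X ^ k) := by
    rw [smul_eq_C_mul]; ring
  rw [hsplit, map_add, map_smul, laguerreFunctional_laguerre_mul_X_pow_self hα,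
    laguerreFunctional_laguerre_mul_of_degree_lt hα hlow, smul_eq_mul]
  have hsq : ((-1 : ℝ) ^ k) * (-1) ^ k = 1 := by rw [← mul_pow]; simp
  linear_combination Gamma (α + k + 1) / k.factorial * hsq

theorem laguerreSequence_isOrthogonal (hα : -1 < α) :
    (laguerreSequence α).IsOrthogonal (laguerreFunctional α) where
  apply_mul_of_degree_lt _ _ hp := laguerreFunctional_laguerre_mul_of_degree_lt hα hp
  apply_mul_self_ne_zero k := by
    show laguerreFunctional α (laguerre α k * laguerre α k) ≠ 0
    rw [laguerreFunctional_laguerre_mul_self hα]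
    exact div_ne_zero (Gamma_pos_of_pos (add_natCast_add_one_pos hα k)).ne'
      (by simp [Nat.factorial_ne_zero])

end Orthogonality

theorem eqOn_exp_neg_mul_rpow_sub_one (α : ℝ) (m : ℕ) :
    Set.EqOn (fun x : ℝ => exp (-x) * x ^ (α + m + 1 - 1))
      (fun x => x ^ m * x ^ α * exp (-x)) (Set.Ioi 0) := fun x (hx : 0 < x) => by
  simp only [add_sub_cancel_right, rpow_add hx, rpow_natCast]
  ring

theorem integrableOn_pow_mul_rpow_mul_exp {α : ℝ} (hα : -1 < α) (m : ℕ) :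
    IntegrableOn (fun x : ℝ => x ^ m * x ^ α * exp (-x)) (Set.Ioi 0) :=
  (GammaIntegral_convergent (add_natCast_add_one_pos hα m)).congr_fun
    (eqOn_exp_neg_mul_rpow_sub_one α m) measurableSet_Ioi

theorem setIntegral_pow_mul_rpow_mul_exp {α : ℝ} (hα : -1 < α) (m : ℕ) :
    ∫ x in Set.Ioi (0 : ℝ), x ^ m * x ^ α * exp (-x) = Gamma (α + m + 1) := by
  rw [Gamma_eq_integral (add_natCast_add_one_pos hα m), setIntegral_congr_fun measurableSet_Ioi
    (eqOn_exp_neg_mul_rpow_sub_one α m)]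

theorem setIntegral_eval_mul_rpow_mul_exp {α : ℝ} (hα : -1 < α) (p : ℝ[X]) :
    ∫ x in Set.Ioi (0 : ℝ), p.eval x * x ^ α * exp (-x) = laguerreFunctional α p := by
  have hexpand : ∀ x : ℝ, p.eval x * x ^ α * exp (-x) =
      ∑ i ∈ range (p.natDegree + 1), p.coeff i * (x ^ i * x ^ α * exp (-x)) := fun x => by
    rw [eval_eq_sum_range, sum_mul, sum_mul]
    exact sum_congr rfl fun i _ => by ring
  simp_rw [hexpand]
  rw [integral_finsetSum _ fun i _ => (integrableOn_pow_mul_rpow_mul_exp hα i).const_mul _,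
    laguerreFunctional, lsum_apply, sum_over_range _ (by simp)]
  refine sum_congr rfl fun i _ => ?_
  rw [integral_const_mul, setIntegral_pow_mul_rpow_mul_exp hα i]
  simp [mul_comm]

theorem sobolevInner_eq {α : ℝ} (hα : -1 < α) {M : ℕ} (c μ : Fin M → ℝ) (ν : Fin M → ℕ)
    (f g : ℝ[X]) :
    sobolevInner α c μ ν f g = laguerreFunctional α (f * g) +
      ∑ j, μ j * (derivative^[ν j] f).eval (c j) * (derivative^[ν j] g).eval (c j) := by
  simp only [sobolevInner, ← setIntegral_eval_mul_rpow_mul_exp hα, eval_mul]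

theorem iteratedDeriv_laguerreKernel {α : ℝ} (hα : -1 < α) {n : ℕ} (hn : 1 ≤ n) (m : ℕ) (x c : ℝ) :
    iteratedDeriv m (fun y => laguerreKernel α (n - 1) x y) c =
      ((laguerreSequence α).reproducingKernel (laguerreFunctional α) n
        (evalIterateDerivative c m)).eval x := by
  set D := evalIterateDerivative c m
  have hK : (fun y => laguerreKernel α (n - 1) x y) = fun y =>
      (∑ k ∈ range n, (k.factorial / Gamma (α + k + 1) * (laguerre α k).eval x) •
        laguerre α k).eval y := funext fun y => by
    simp only [laguerreKernel, Nat.sub_add_cancel hn, eval_finsetSum, eval_smul, smul_eq_mul]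
  simp only [hK, iteratedDeriv_eval]
  rw [← evalIterateDerivative_apply, map_sum, Sequence.reproducingKernel, eval_finsetSum]
  refine sum_congr rfl fun k _ => ?_
  show D ((_ : ℝ) • laguerre α k) = ((D (laguerre α k) /
    laguerreFunctional α (laguerre α k * laguerre α k)) • laguerre α k).eval x
  rw [map_smul, eval_smul, laguerreFunctional_laguerre_mul_self hα, smul_eq_mul, smul_eq_mul,
    div_div_eq_mul_div]
  ring

theorem sobolev_connection_formula_kernel_general (α : ℝ) (hα : -1 < α) (M : ℕ)
    (c : Fin M → ℝ) (μ : Fin M → ℝ) (ν : Fin M → ℕ) (n : ℕ) (hn : 1 ≤ n)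
    (S : Polynomial ℝ) (hdeg : S.natDegree = n)
    (hlead : S.leadingCoeff = (-1) ^ n / n.factorial)
    (horth : ∀ p : Polynomial ℝ, p.degree < n → sobolevInner α c μ ν S p = 0) (x : ℝ) :
    S.eval x = (laguerre α n).eval x -
      ∑ j, μ j * (Polynomial.derivative^[ν j] S).eval (c j) *
        iteratedDeriv (ν j) (fun y => laguerreKernel α (n - 1) x y) (c j) := by
  have hL := laguerreSequence_isOrthogonal hα
  set R := fun j => (laguerreSequence α).reproducingKernel (laguerreFunctional α) n
    (evalIterateDerivative (c j) (ν j))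
  have hT : laguerre α n - S - ∑ j, (μ j * evalIterateDerivative (c j) (ν j) S) • R j = 0 := by
    refine hL.eq_zero_of_apply_mul_eq_zero (n := n) ?_ fun p hp => ?_
    · refine mem_degreeLT.mp (sub_mem (mem_degreeLT.mpr (degree_laguerre_sub_lt hdeg hlead))
        (sum_mem fun j _ => Submodule.smul_mem _ _ (Sequence.reproducingKernel_mem_degreeLT _ _)))
    · have h := horth p hp
      rw [sobolevInner_eq hα] at h
      simp only [sub_mul, sum_mul, smul_mul_assoc, map_sub, map_sum, map_smul, smul_eq_mul, R,
        ← hL.apply_eq_reproducingKernel_mul _ hp,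
        laguerreFunctional_laguerre_mul_of_degree_lt hα hp, evalIterateDerivative_apply]
      linear_combination -h
  have hx := congrArg (eval x) hT
  simp only [eval_sub, eval_finsetSum, eval_smul, smul_eq_mul, eval_zero, R,
    evalIterateDerivative_apply] at hx
  simp only [iteratedDeriv_laguerreKernel hα hn]
  linear_combination -hx

/-- Connection formula: the Sobolev-orthogonal polynomial `S_n` equals `L_n^α` minus a
combination of partial derivatives of the kernel `K_{n−1}^α`. -/
theorem sobolev_connection_formula_kernel (α : ℝ) (hα : -1 < α) (M : ℕ) (hM : 1 ≤ M)
    (c : Fin M → ℝ) (μ : Fin M → ℝ) (ν : Fin M → ℕ) (n : ℕ) (hn : 1 ≤ n)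
    (S : Polynomial ℝ) (hdeg : S.natDegree = n)
    (hlead : S.leadingCoeff = (-1) ^ n / n.factorial)
    (horth : ∀ p : Polynomial ℝ, p.degree < n → sobolevInner α c μ ν S p = 0) (x : ℝ) :
    S.eval x = (laguerre α n).eval x -
      ∑ j, μ j * (Polynomial.derivative^[ν j] S).eval (c j) *
        iteratedDeriv (ν j) (fun y => laguerreKernel α (n - 1) x y) (c j) :=
  sobolev_connection_formula_kernel_general α hα M c μ ν n hn S hdeg hlead horth x
end
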